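/- Let n ≥ 1. Then (1 + Σ_{k=1}^{2^{n-1} − 1} 2*cos(2kπ/2^{n+1}))² − (Σ_{k=0}^{2^{n-1} − 1} 2*cos((2k+1)π/2^{n+1}))² = −1; equivalently, η_{n-1}² − (η_n − η_{n-1})² = −1. -/
import Mathlib


/-- `η m = 1 + Σ_{k=1}^{2^m − 1} 2 cos(kπ/2^(m+1))`. -/
noncomputable def η (m : ℕ) : ℝ :=
  1 + ∑ k ∈ Finset.Icc (1 : ℕ) (2 ^ m - 1), 2 * Real.cos ((k : ℝ) * Real.pi / 2 ^ (m + 1))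

open Real Finset

private lemma tele_even (x : ℝ) (N : ℕ) :
    (∑ k ∈ Finset.range N, 2 * Real.cos ((2*(k:ℝ)+2) * x)) * Real.sin x
      = Real.sin ((2*(N:ℝ)+1)*x) - Real.sin x := by
  induction N with
  | zero => simp
  | succ n ih =>
    rw [Finset.sum_range_succ, add_mul, ih]
    have h := Real.sin_sub_sin ((2*(n:ℝ)+3)*x) ((2*(n:ℝ)+1)*x)
    have e1 : ((2*(n:ℝ)+3)*x - (2*(n:ℝ)+1)*x)/2 = x := by ring
    have e2 : ((2*(n:ℝ)+3)*x + (2*(n:ℝ)+1)*x)/2 = (2*(n:ℝ)+2)*x := by ring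
    rw [e1, e2] at h
    push_cast
    ring_nf
    ring_nf at h
    linarith

private lemma tele_odd (x : ℝ) (N : ℕ) :
    (∑ k ∈ Finset.range N, 2 * Real.cos ((2*(k:ℝ)+1) * x)) * Real.sin x
      = Real.sin (2*(N:ℝ)*x) := by
  induction N with
  | zero => simp
  | succ n ih =>
    rw [Finset.sum_range_succ, add_mul, ih]
    have h := Real.sin_sub_sin (2*((n:ℝ)+1)*x) (2*(n:ℝ)*x)
    have e1 : (2*((n:ℝ)+1)*x - 2*(n:ℝ)*x)/2 = x := by ring
    have e2 : (2*((n:ℝ)+1)*x + 2*(n:ℝ)*x)/2 = (2*(n:ℝ)+1)*x := by ring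
    rw [e1, e2] at h
    push_cast
    ring_nf
    ring_nf at h
    linarith

private lemma eta_mul (m : ℕ) :
    η m * Real.sin (π / 2 ^ (m + 2)) = Real.cos (π / 2 ^ (m + 2)) := by
  set x : ℝ := π / 2 ^ (m + 2) with hx
  have hpow : (2:ℝ) ^ (m + 2) = 2 ^ (m + 1) * 2 := by ring
  have hsum : ∑ k ∈ Finset.Icc (1 : ℕ) (2 ^ m - 1),
      2 * Real.cos ((k : ℝ) * π / 2 ^ (m + 1))
      = ∑ k ∈ Finset.range (2 ^ m - 1), 2 * Real.cos ((2*(k:ℝ)+2) * x) := by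
    rw [← Finset.Ico_add_one_right_eq_Icc, Finset.sum_Ico_eq_sum_range]
    apply Finset.sum_congr (by norm_num)
    intro i _
    congr 1
    rw [hx, hpow]
    push_cast
    have : (2:ℝ) ^ (m+1) ≠ 0 := by positivity
    field_simp
    ring
  have hNx : (2 * ((2:ℝ)^m - 1) + 1) * x = π/2 - x := by
    rw [hx]
    have h2 : (2:ℝ)^(m+2) ≠ 0 := by positivity
    field_simp
    ring
  have hcast : ((2 ^ m - 1 : ℕ) : ℝ) = (2:ℝ)^m - 1 := by
    have : (1:ℕ) ≤ 2 ^ m := Nat.one_le_two_pow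
    push_cast [this]
    ring
  have ht := tele_even x (2 ^ m - 1)
  rw [hcast, hNx, Real.sin_pi_div_two_sub] at ht
  rw [η, hsum, add_mul, one_mul, ht]
  ring

private lemma sin_pos_pow (j : ℕ) (hj : 1 ≤ j) : 0 < Real.sin (π / 2 ^ j) := by
  apply Real.sin_pos_of_pos_of_lt_pi
  · positivity
  · have h1 : (2:ℝ) ≤ 2 ^ j := by
      calc (2:ℝ) = 2 ^ 1 := by norm_num
        _ ≤ 2 ^ j := by exact pow_le_pow_right₀ (by norm_num) hj
    have : π / 2 ^ j ≤ π / 2 :=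
      div_le_div_of_nonneg_left Real.pi_pos.le (by norm_num) h1
    linarith [Real.pi_pos]

private lemma cos_pos_pow (j : ℕ) (hj : 2 ≤ j) : 0 < Real.cos (π / 2 ^ j) := by
  apply Real.cos_pos_of_mem_Ioo
  constructor
  · have : (0:ℝ) < π / 2 ^ j := by positivity
    linarith [Real.pi_pos]
  · have h1 : (2:ℝ) < 2 ^ j := by
      calc (2:ℝ) < 2 ^ 2 := by norm_num
        _ ≤ 2 ^ j := by exact pow_le_pow_right₀ (by norm_num) hj
    exact div_lt_div_of_pos_left Real.pi_pos (by norm_num) h1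

private lemma eta_eq (m : ℕ) :
    η m = Real.cos (π / 2 ^ (m + 2)) / Real.sin (π / 2 ^ (m + 2)) := by
  have hs := sin_pos_pow (m + 2) (by omega)
  rw [eq_div_iff hs.ne']
  exact eta_mul m

theorem stmt12 (n : ℕ) (hn : 1 ≤ n) :
    ((1 + ∑ k ∈ Finset.Icc (1 : ℕ) (2 ^ (n - 1) - 1),
        2 * Real.cos (2 * (k : ℝ) * Real.pi / 2 ^ (n + 1))) ^ 2 -
      (∑ k ∈ Finset.range (2 ^ (n - 1)),
        2 * Real.cos ((2 * (k : ℝ) + 1) * Real.pi / 2 ^ (n + 1))) ^ 2 = -1) ∧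
    η (n - 1) ^ 2 - (η n - η (n - 1)) ^ 2 = -1 := by
  obtain ⟨m, rfl⟩ : ∃ m, n = m + 1 := ⟨n - 1, by omega⟩
  simp only [Nat.add_sub_cancel]
  set α : ℝ := π / 2 ^ (m + 2) with hα
  set β : ℝ := π / 2 ^ (m + 3) with hβ
  have hsα : 0 < Real.sin α := sin_pos_pow (m + 2) (by omega)
  have hsβ : 0 < Real.sin β := sin_pos_pow (m + 3) (by omega)
  have hcβ : 0 < Real.cos β := cos_pos_pow (m + 3) (by omega)
  have hαβ : α = 2 * β := by
    rw [hα, hβ]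
    have : (2:ℝ) ^ (m + 3) = 2 ^ (m + 2) * 2 := by ring
    rw [this]
    field_simp
  -- first sum equals η m
  have hfirst : (1 + ∑ k ∈ Finset.Icc (1 : ℕ) (2 ^ m - 1),
      2 * Real.cos (2 * (k : ℝ) * π / 2 ^ (m + 1 + 1))) = η m := by
    rw [η]
    congr 1
    apply Finset.sum_congr rfl
    intro k _
    congr 1
    have : (2:ℝ) ^ (m + 1 + 1) = 2 ^ (m + 1) * 2 := by ring
    rw [this]
    ring
  -- odd sum equals 1 / sin α
  have hodd : (∑ k ∈ Finset.range (2 ^ m),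
      2 * Real.cos ((2 * (k : ℝ) + 1) * π / 2 ^ (m + 1 + 1))) = 1 / Real.sin α := by
    have ht := tele_odd α (2 ^ m)
    have harg : ∀ k : ℕ, (2 * (k:ℝ) + 1) * α = (2 * (k:ℝ) + 1) * π / 2 ^ (m + 1 + 1) := by
      intro k
      rw [hα]
      have h2 : (2:ℝ) ^ (m + 2) ≠ 0 := by positivity
      field_simp
    have hNα : 2 * ((2:ℝ) ^ m) * α = π / 2 := by
      rw [hα]
      have h2 : (2:ℝ) ^ (m + 2) = 2 ^ m * 4 := by ring
      rw [h2]
      field_simp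
      ring
    rw [show ((2^m : ℕ) : ℝ) = (2:ℝ)^m by push_cast; ring] at ht
    rw [hNα, Real.sin_pi_div_two] at ht
    simp only [harg] at ht
    rw [eq_div_iff hsα.ne']
    exact ht
  -- η (m+1) - η m = 1 / sin α
  have hdiff : η (m + 1) - η m = 1 / Real.sin α := by
    rw [show η (m + 1) = Real.cos (π / 2 ^ (m + 3)) / Real.sin (π / 2 ^ (m + 3)) from
        eta_eq (m + 1), eta_eq m, ← hα, ← hβ, hαβ, Real.sin_two_mul, Real.cos_two_mul]
    field_simp
    ring
  have key : (Real.cos α / Real.sin α) ^ 2 - (1 / Real.sin α) ^ 2 = -1 := by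
    have h := Real.sin_sq_add_cos_sq α
    field_simp
    linarith
  constructor
  · rw [hfirst, hodd, eta_eq m, ← hα]
    exact key
  · rw [hdiff, eta_eq m, ← hα]
    exact key
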